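/- A Hamiltonian cycle on S can be obtained by shortcutting some Euler tour of the doubled tree of T if and only if it conforms to T, i.e., if and only if for every node u ∈ S the set T(u) forms a contiguous cyclic arc of the cycle. -/

import Mathlib

/-- A rooted tree on a vertex type `V`, given by a parent function under which
every vertex reaches the root. -/
structure ParentTree (V : Type) where
  root : V
  parent : V → V
  parent_root : parent root = root
  reaches_root : ∀ v, ∃ k, parent^[k] v = root

namespace ParentTree

variable {V : Type}

/-- The set `C(u)` of children of `u`. -/
def children (T : ParentTree V) (u : V) : Set V := {v | T.parent v = u ∧ v ≠ u}

/-- The set `T(u)` of descendants of `u` (including `u` itself). -/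
def desc (T : ParentTree V) (u : V) : Set V := {b | ∃ k, T.parent^[k] b = u}

/-- For a set `U` of siblings, `T(U) = ⋃_{u ∈ U} T(u)`. -/
def descU (T : ParentTree V) (U : Set V) : Set V := ⋃ u ∈ U, T.desc u

end ParentTree

/-- The set of points occurring in a list. -/
def listSet {V : Type} (l : List V) : Set V := {x | x ∈ l}

/-- The weight of a Hamiltonian cycle given as a list: the sum of distances
over cyclically consecutive pairs. -/
def cycleWeight {V X : Type} [MetricSpace X] (f : V → X) (h : List V) : ℝ :=
  ((h.zip (h.rotate 1)).map fun p => dist (f p.1) (f p.2)).sum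

/-- A Hamiltonian cycle on the point set: a cyclic ordering of all points,
represented as a duplicate-free list containing every point. -/
def IsHamCycle {V : Type} (h : List V) : Prop := h.Nodup ∧ ∀ x : V, x ∈ h

/-- The set `A` forms a contiguous cyclic arc of the cycle `h`. -/
def IsCyclicArc {V : Type} (A : Set V) (h : List V) : Prop :=
  ∃ i : ℕ, listSet ((h.rotate i).take A.ncard) = A

/-- A Hamiltonian cycle conforms to the rooted tree `T` if for every node `u`
the set `T(u)` of descendants of `u` forms a contiguous cyclic arc of the cycle. -/
def CycleConforms {V : Type} (T : ParentTree V) (h : List V) : Prop :=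
  ∀ u : V, IsCyclicArc (T.desc u) h

/-- Adjacency in the tree `T`. -/
def TreeAdj {V : Type} (T : ParentTree V) (a b : V) : Prop :=
  a ≠ b ∧ (T.parent a = b ∨ T.parent b = a)

/-- An Euler tour of the doubled tree of `T`: a closed walk
`w₀, w₁, …, w_{2(n−1)} = w₀` in which consecutive vertices are adjacent in `T`
and each edge of `T` is traversed exactly twice. -/
def IsEulerTour {V : Type} [Fintype V] [DecidableEq V] (T : ParentTree V)
    (t : List V) : Prop :=
  t.length = 2 * (Fintype.card V - 1) + 1 ∧
  t.head? = t.getLast? ∧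
  t.Chain' (TreeAdj T) ∧
  ∀ v : V, v ≠ T.root →
    (t.zip t.tail).countP
      (fun p => decide ((p.1 = v ∧ p.2 = T.parent v) ∨
        (p.1 = T.parent v ∧ p.2 = v))) = 2

/-- The Hamiltonian cycle `h` is obtained by shortcutting the Euler tour `t`:
the cyclic vertex sequence of `h` is a cyclic subsequence of
`w₀, w₁, …, w_{2(n−1)−1}`. -/
def IsShortcutting {V : Type} (h t : List V) : Prop :=
  ∃ i j : ℕ, (h.rotate i).Sublist (t.dropLast.rotate j)

/-!
For `u ≠ root`, a walk in `T` crosses the boundary of the subtree `T(u)` exactly when it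
traverses the edge `{u, parent u}`. An Euler tour therefore crosses each such boundary exactly
twice. Shortcutting only deletes points, which cannot create crossings, so a shortcut cycle has
a rotation crossing the boundary of `T(u)` at most twice, and a cyclic sequence with such a
rotation meets `T(u)` in an arc.

Conversely, join the cyclically consecutive points of a conforming cycle by tree paths. A tree
path crosses the boundary of `T(u)` exactly when its endpoints lie on different sides, so the
resulting closed walk traverses `{u, parent u}` as often as the cycle crosses the boundary of
the arc `T(u)`, namely twice.
-/

namespace List

variable {α : Type*}

lemma sublist_dropLast_of_append_singleton_sublist {l t : List α} {x : α}
    (h : (l ++ [x]).Sublist t) : l.Sublist t.dropLast := by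
  obtain ⟨r₁, r₂, rfl, h₁, h₂⟩ := append_sublist_iff.1 h
  have hr₂ : r₂ ≠ [] := by rintro rfl; simp at h₂
  rw [dropLast_append_of_ne_nil hr₂]
  exact h₁.trans (sublist_append_left _ _)

lemma IsChain.rel_of_mem_zip_tail {R : α → α → Prop} :
    ∀ {t : List α}, t.IsChain R → ∀ q ∈ t.zip t.tail, R q.1 q.2
  | [], _, _, hq | [_], _, _, hq => by simp at hq
  | a :: b :: t, ht, q, hq => by
    rw [isChain_cons_cons] at ht
    rcases mem_cons.1 hq with rfl | hq
    · exact ht.1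
    · exact IsChain.rel_of_mem_zip_tail ht.2 q hq

end List

section Crossings

open Classical

variable {α : Type*} (A : Set α)

noncomputable def crossings (l : List α) : ℕ :=
  (l.zip l.tail).countP fun q => decide ¬(q.1 ∈ A ↔ q.2 ∈ A)

/-- `l ++ l.take 1` closes the cyclic sequence `l` up by returning to its first point. -/
noncomputable def cyclicCrossings (l : List α) : ℕ := crossings A (l ++ l.take 1)

def IsCyclicSplit (l : List α) : Prop :=
  ∃ i B R, l.rotate i = B ++ R ∧ (∀ x ∈ B, x ∈ A) ∧ ∀ x ∈ R, x ∉ A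

variable {A}

@[simp] lemma crossings_nil : crossings A [] = 0 := rfl

@[simp] lemma crossings_singleton (a : α) : crossings A [a] = 0 := rfl

@[simp] lemma crossings_cons_cons (a b : α) (l : List α) :
    crossings A (a :: b :: l) = crossings A (b :: l) + if (a ∈ A ↔ b ∈ A) then 0 else 1 := by
  simp only [crossings, List.tail_cons, List.zip_cons_cons, List.countP_cons]
  split_ifs <;> simp_all

lemma crossings_append_cons (l₁ : List α) (x : α) (l₂ : List α) :
    crossings A (l₁ ++ x :: l₂) = crossings A (l₁ ++ [x]) + crossings A (x :: l₂) := by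
  induction l₁ with
  | nil => simp
  | cons a l₁ ih =>
    cases l₁ with
    | nil =>
      simp only [List.cons_append, List.nil_append, crossings_cons_cons, crossings_singleton]
      omega
    | cons b l₁ => simp only [List.cons_append, crossings_cons_cons] at ih ⊢; omega

lemma crossings_append_le (l₁ l₂ : List α) :
    crossings A (l₁ ++ l₂) ≤ crossings A l₁ + crossings A l₂ + 1 := by
  induction l₁ with
  | nil => simp
  | cons a l₁ ih =>
    cases l₁ with
    | nil =>
      cases l₂ with
      | nil => simp
      | cons b l₂ =>
        simp only [List.cons_append, List.nil_append, crossings_cons_cons, crossings_singleton]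
        split_ifs <;> omega
    | cons b l₁ => simp only [List.cons_append, crossings_cons_cons] at ih ⊢; omega

lemma crossings_eq_zero_of_forall_mem_iff (c : Prop) {l : List α}
    (hl : ∀ x ∈ l, x ∈ A ↔ c) : crossings A l = 0 := by
  refine List.countP_eq_zero.2 fun q hq => ?_
  have hq₁ := hl q.1 (List.of_mem_zip hq).1
  have hq₂ := hl q.2 (List.mem_of_mem_tail (List.of_mem_zip hq).2)
  simp [hq₁, hq₂]

lemma mem_iff_of_crossings_cons_eq_zero {a : α} {l : List α} (hl : crossings A (a :: l) = 0) :
    ∀ x ∈ l, x ∈ A ↔ a ∈ A := by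
  induction l generalizing a with
  | nil => simp
  | cons b l ih =>
    rw [crossings_cons_cons] at hl
    have hab : a ∈ A ↔ b ∈ A := by by_contra h; simp [h] at hl
    intro x hx
    rcases List.mem_cons.1 hx with rfl | hx
    · exact hab.symm
    · exact (ih (by omega) x hx).trans hab.symm

lemma crossings_pos {l : List α} {x y : α} (hx : x ∈ l) (hy : y ∈ l) (hxA : x ∈ A)
    (hyA : y ∉ A) : 0 < crossings A l := by
  obtain _ | ⟨a, l⟩ := l
  · simp at hx
  by_contra! h0
  have hsame : ∀ z ∈ a :: l, z ∈ A ↔ a ∈ A := by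
    rintro z (_ | ⟨_, hz⟩)
    · rfl
    · exact mem_iff_of_crossings_cons_eq_zero (by omega) z hz
  exact hyA ((hsame y hy).2 ((hsame x hx).1 hxA))

lemma crossings_le_crossings_cons (a : α) (l : List α) : crossings A l ≤ crossings A (a :: l) := by
  cases l <;> simp

lemma crossings_cons_le (a b : α) (l : List α) :
    crossings A (a :: l) ≤ crossings A (b :: l) + crossings A [a, b] := by
  cases l with
  | nil => simp
  | cons c l => simp only [crossings_cons_cons, crossings_singleton]; split_ifs <;> grind

lemma crossings_cons_mono {l' l : List α} (hs : l'.Sublist l) (a : α) :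
    crossings A (a :: l') ≤ crossings A (a :: l) := by
  induction hs generalizing a with
  | slnil => rfl
  | @cons l' l b _ ih =>
    calc crossings A (a :: l') ≤ crossings A (a :: l) := ih a
      _ ≤ crossings A (b :: l) + crossings A [a, b] := crossings_cons_le a b l
      _ = crossings A (a :: b :: l) := by simp
  | cons_cons b _ ih => simpa using ih b

lemma crossings_mono {l' l : List α} (hs : l'.Sublist l) : crossings A l' ≤ crossings A l := by
  induction hs with
  | slnil => rfl
  | cons a _ ih => exact ih.trans (crossings_le_crossings_cons a _)
  | cons_cons a hs _ => exact crossings_cons_mono hs a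

lemma even_crossings_cons_append_singleton_iff (a b : α) (l : List α) :
    Even (crossings A (a :: l ++ [b])) ↔ (a ∈ A ↔ b ∈ A) := by
  induction l generalizing a with
  | nil => by_cases ha : a ∈ A <;> by_cases hb : b ∈ A <;> simp [ha, hb]
  | cons c l ih =>
    rw [List.cons_append, List.cons_append, crossings_cons_cons, Nat.even_add, ← List.cons_append,
      ih]
    by_cases ha : a ∈ A <;> by_cases hb : b ∈ A <;> by_cases hc : c ∈ A <;> simp [ha, hb, hc]

lemma even_cyclicCrossings (l : List α) : Even (cyclicCrossings A l) := by
  cases l with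
  | nil => simp [cyclicCrossings]
  | cons a l =>
    simp only [cyclicCrossings, List.take_succ_cons, List.take_zero]
    exact (even_crossings_cons_append_singleton_iff a a l).2 Iff.rfl

lemma crossings_le_cyclicCrossings (l : List α) : crossings A l ≤ cyclicCrossings A l :=
  crossings_mono (List.sublist_append_left l _)

lemma cyclicCrossings_append_comm (l₁ l₂ : List α) :
    cyclicCrossings A (l₁ ++ l₂) = cyclicCrossings A (l₂ ++ l₁) := by
  obtain _ | ⟨a, l₁⟩ := l₁
  · simp
  obtain _ | ⟨b, l₂⟩ := l₂
  · simp
  have key (a b : α) (l₁ l₂ : List α) : cyclicCrossings A (a :: l₁ ++ b :: l₂) =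
      crossings A (a :: l₁ ++ [b]) + crossings A (b :: l₂ ++ [a]) := by
    simp only [cyclicCrossings, List.cons_append, List.take_succ_cons, List.take_zero,
      List.append_assoc]
    rw [← List.cons_append, crossings_append_cons, List.cons_append]
  rw [key, key, add_comm]

lemma cyclicCrossings_rotate (l : List α) (n : ℕ) :
    cyclicCrossings A (l.rotate n) = cyclicCrossings A l := by
  rw [List.rotate_eq_drop_append_take_mod, cyclicCrossings_append_comm, List.take_append_drop]

lemma crossings_eq_cyclicCrossings_dropLast {t : List α} (ht : t.head? = t.getLast?) :
    crossings A t = cyclicCrossings A t.dropLast := by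
  obtain rfl | ⟨l, b, rfl⟩ := t.eq_nil_or_concat
  · rfl
  obtain _ | ⟨a, l⟩ := l
  · simp [cyclicCrossings]
  simp only [List.concat_eq_append, List.cons_append, List.head?_cons] at ht
  rw [← List.cons_append, List.getLast?_concat, Option.some.injEq] at ht
  subst ht
  rw [List.concat_eq_append, List.dropLast_concat]
  rfl

lemma IsCyclicSplit.cyclicCrossings_le_two {l : List α} (hl : IsCyclicSplit A l) :
    cyclicCrossings A l ≤ 2 := by
  obtain ⟨i, B, R, hrot, hB, hR⟩ := hl
  have hB0 : crossings A B = 0 := crossings_eq_zero_of_forall_mem_iff True (by simpa using hB)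
  have hR0 : crossings A R = 0 := crossings_eq_zero_of_forall_mem_iff False (by simpa using hR)
  have hF0 : crossings A ((B ++ R).take 1) = 0 := by
    obtain _ | ⟨a, _⟩ := B ++ R <;> simp
  rw [← cyclicCrossings_rotate l i, hrot, cyclicCrossings, List.append_assoc]
  have h1 := crossings_append_le (A := A) B (R ++ (B ++ R).take 1)
  have h2 := crossings_append_le (A := A) R ((B ++ R).take 1)
  omega

lemma crossings_pair_add_crossings_pair {a b c : α} (h : (a ∈ A ↔ b ∈ A) ∨ (b ∈ A ↔ c ∈ A)) :
    crossings A [a, b] + crossings A [b, c] = crossings A [a, c] := by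
  simp only [crossings_cons_cons, crossings_singleton, zero_add]
  split_ifs <;> tauto

lemma exists_append_of_crossings_le_one (c : Prop) :
    ∀ {l : List α}, crossings A l ≤ 1 → (∀ a ∈ l.head?, a ∈ A ↔ c) →
      ∃ l₁ l₂, l = l₁ ++ l₂ ∧ (∀ x ∈ l₁, x ∈ A ↔ c) ∧ ∀ x ∈ l₂, x ∈ A ↔ ¬c
  | [], _, _ => ⟨[], [], by simp⟩
  | [a], _, ha => ⟨[a], [], by simpa using ha⟩
  | a :: b :: l, hl, ha => by
    simp only [List.head?_cons, Option.mem_def, Option.some.injEq, forall_eq'] at ha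
    rw [crossings_cons_cons] at hl
    by_cases hb : b ∈ A ↔ c
    · obtain ⟨l₁, l₂, hsplit, h₁, h₂⟩ :=
        exists_append_of_crossings_le_one c (l := b :: l) (by split_ifs at hl <;> omega)
          (by simpa using hb)
      exact ⟨a :: l₁, l₂, by rw [hsplit, List.cons_append], by simpa [ha] using h₁, h₂⟩
    · have hsame := mem_iff_of_crossings_cons_eq_zero (A := A) (a := b) (l := l)
        (by split_ifs at hl <;> simp_all)
      refine ⟨[a], b :: l, rfl, by simpa using ha, ?_⟩
      rintro x (_ | ⟨_, hx⟩)
      · tauto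
      · exact (hsame x hx).trans (by tauto)

lemma exists_append_append_of_crossings_le_two (c : Prop) :
    ∀ {l : List α}, crossings A l ≤ 2 → (∀ a ∈ l.head?, a ∈ A ↔ c) →
      ∃ l₁ l₂ l₃, l = l₁ ++ l₂ ++ l₃ ∧ (∀ x ∈ l₁ ++ l₃, x ∈ A ↔ c) ∧ ∀ x ∈ l₂, x ∈ A ↔ ¬c
  | [], _, _ => ⟨[], [], [], by simp⟩
  | [a], _, ha => ⟨[a], [], [], by simpa using ha⟩
  | a :: b :: l, hl, ha => by
    simp only [List.head?_cons, Option.mem_def, Option.some.injEq, forall_eq'] at ha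
    rw [crossings_cons_cons] at hl
    by_cases hb : b ∈ A ↔ c
    · obtain ⟨l₁, l₂, l₃, hsplit, h₁₃, h₂⟩ :=
        exists_append_append_of_crossings_le_two c (l := b :: l)
          (by split_ifs at hl <;> omega) (by simpa using hb)
      exact ⟨a :: l₁, l₂, l₃, by rw [hsplit]; rfl, by simpa [ha] using h₁₃, h₂⟩
    · obtain ⟨l₂, l₃, hsplit, h₂, h₃⟩ :=
        exists_append_of_crossings_le_one (A := A) (¬c) (l := b :: l)
          (by split_ifs at hl <;> simp_all)
          (by simp only [List.head?_cons, Option.mem_def, Option.some.injEq, forall_eq']; tauto)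
      refine ⟨[a], l₂, l₃, by simp [hsplit], ?_, h₂⟩
      simp only [List.singleton_append, List.mem_cons, forall_eq_or_imp]
      exact ⟨ha, fun x hx => (h₃ x hx).trans not_not⟩

lemma isCyclicSplit_of_crossings_le_two {l : List α} (hl : crossings A l ≤ 2) :
    IsCyclicSplit A l := by
  obtain _ | ⟨a, m⟩ := l
  · exact ⟨0, [], [], by simp⟩
  obtain ⟨l₁, l₂, l₃, hsplit, h₁₃, h₂⟩ :=
    exists_append_append_of_crossings_le_two (a ∈ A) hl (by simp)
  by_cases ha : a ∈ A
  · refine ⟨(l₁ ++ l₂).length, l₃ ++ l₁, l₂, ?_, ?_, ?_⟩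
    · rw [hsplit, List.rotate_append_length_eq, List.append_assoc]
    · intro x hx
      exact (h₁₃ x (by rw [List.mem_append] at hx ⊢; tauto)).2 ha
    · intro x hx
      exact (h₂ x hx).not.2 (not_not.2 ha)
  · refine ⟨l₁.length, l₂, l₃ ++ l₁, ?_, ?_, ?_⟩
    · rw [hsplit, List.append_assoc, List.rotate_append_length_eq, List.append_assoc]
    · intro x hx
      exact (h₂ x hx).2 ha
    · intro x hx
      exact (h₁₃ x (by rw [List.mem_append] at hx ⊢; tauto)).not.2 ha

lemma IsCyclicSplit.of_rotate {l : List α} {n : ℕ}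
    (hl : IsCyclicSplit A (l.rotate n)) : IsCyclicSplit A l := by
  obtain ⟨i, B, R, hrot, hB, hR⟩ := hl
  exact ⟨n + i, B, R, by rw [← List.rotate_rotate, hrot], hB, hR⟩

lemma cyclicCrossings_eq_two {l : List α} (hl : cyclicCrossings A l ≤ 2)
    {x y : α} (hx : x ∈ l) (hy : y ∈ l) (hxA : x ∈ A) (hyA : y ∉ A) : cyclicCrossings A l = 2 := by
  have hpos := (crossings_pos hx hy hxA hyA).trans_le (crossings_le_cyclicCrossings l)
  obtain ⟨k, hk⟩ := even_cyclicCrossings (A := A) l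
  omega

end Crossings

lemma isCyclicArc_iff_isCyclicSplit {V : Type} {A : Set V} {h : List V} (hh : IsHamCycle h) :
    IsCyclicArc A h ↔ IsCyclicSplit A h := by
  classical
  constructor
  · rintro ⟨i, hi⟩
    refine ⟨i, _, _, (List.take_append_drop A.ncard (h.rotate i)).symm, fun x hx => ?_,
      fun x hx hxA => ?_⟩
    · rw [← hi]; exact hx
    · rw [← hi] at hxA
      have hnd : (List.take A.ncard (h.rotate i) ++ List.drop A.ncard (h.rotate i)).Nodup := by
        rw [List.take_append_drop]; exact List.nodup_rotate.2 hh.1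
      exact List.disjoint_of_nodup_append hnd hxA hx
  · rintro ⟨i, B, R, hrot, hB, hR⟩
    have hnd : (B ++ R).Nodup := hrot ▸ List.nodup_rotate.2 hh.1
    have hBA : listSet B = A := by
      ext x
      refine ⟨hB x, fun hx => ?_⟩
      have hmem : x ∈ B ++ R := hrot ▸ List.mem_rotate.2 (hh.2 x)
      exact (List.mem_append.1 hmem).resolve_right fun hxR => hR x hxR hx
    have hcard : A.ncard = B.length := by
      rw [← hBA, listSet, ← List.coe_toFinset, Set.ncard_coe_finset,
        List.toFinset_card_of_nodup (List.Nodup.of_append_left hnd)]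
    exact ⟨i, by rw [hrot, hcard, List.take_left' rfl, hBA]⟩

namespace ParentTree

open Classical

variable {V : Type} {T : ParentTree V}

variable (T) in
noncomputable def depth (v : V) : ℕ := Nat.find (T.reaches_root v)

lemma iterate_parent_root (k : ℕ) : T.parent^[k] T.root = T.root :=
  Function.iterate_fixed T.parent_root k

lemma depth_eq_zero_iff {v : V} : T.depth v = 0 ↔ v = T.root := by
  simp [depth]

lemma depth_parent (v : V) : T.depth (T.parent v) = T.depth v - 1 := by
  by_cases hv : v = T.root
  · subst hv
    rw [T.parent_root, depth_eq_zero_iff.2 rfl]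
  have hpos : 0 < T.depth v := Nat.pos_of_ne_zero (mt depth_eq_zero_iff.1 hv)
  have hle : T.depth (T.parent v) ≤ T.depth v - 1 := Nat.find_min' _ <| by
    rw [← Function.iterate_succ_apply, Nat.succ_eq_add_one, Nat.sub_add_cancel hpos]
    exact Nat.find_spec (T.reaches_root v)
  have hge : T.depth v ≤ T.depth (T.parent v) + 1 := Nat.find_min' _ <| by
    rw [Function.iterate_succ_apply]
    exact Nat.find_spec (T.reaches_root (T.parent v))
  omega

lemma depth_iterate_parent (k : ℕ) (v : V) : T.depth (T.parent^[k] v) = T.depth v - k := by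
  induction k with
  | zero => rfl
  | succ k ih => rw [Function.iterate_succ_apply', depth_parent, ih]; omega

lemma eq_root_of_iterate_parent_eq_self {v : V} {k : ℕ} (hk : 0 < k)
    (hv : T.parent^[k] v = v) : v = T.root := by
  have := depth_iterate_parent (T := T) k v
  rw [hv] at this
  exact depth_eq_zero_iff.1 (by omega)

lemma parent_ne_self {v : V} (hv : v ≠ T.root) : T.parent v ≠ v :=
  mt (eq_root_of_iterate_parent_eq_self (k := 1) one_pos) hv

lemma mem_desc_self (u : V) : u ∈ T.desc u := ⟨0, rfl⟩

lemma desc_root : T.desc T.root = Set.univ :=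
  Set.eq_univ_of_forall T.reaches_root

lemma root_not_mem_desc {u : V} (hu : u ≠ T.root) : T.root ∉ T.desc u := fun ⟨k, hk⟩ =>
  hu (hk.symm.trans (iterate_parent_root k))

lemma mem_desc_iff {u x : V} : x ∈ T.desc u ↔ x = u ∨ T.parent x ∈ T.desc u := by
  constructor
  · rintro ⟨_ | k, hk⟩
    · exact Or.inl hk
    · exact Or.inr ⟨k, hk⟩
  · rintro (rfl | ⟨k, hk⟩)
    · exact mem_desc_self x
    · exact ⟨k + 1, hk⟩

lemma parent_not_mem_desc {u : V} (hu : u ≠ T.root) : T.parent u ∉ T.desc u := fun ⟨k, hk⟩ =>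
  hu (eq_root_of_iterate_parent_eq_self k.succ_pos hk)

lemma depth_lt_of_mem_desc {a b : V} (hb : b ∈ T.desc a) (hba : b ≠ a) :
    T.depth a < T.depth b := by
  obtain ⟨k, rfl⟩ := hb
  have hk : 0 < k := Nat.pos_of_ne_zero fun hk => hba (by simp [hk])
  have hroot : b ≠ T.root := fun h => hba (by rw [h, iterate_parent_root])
  have := depth_eq_zero_iff.not.2 hroot
  rw [depth_iterate_parent]
  omega

lemma not_mem_desc_of_parent_not_mem_desc {u x y : V} (hxy : x ≠ y)
    (hd : T.depth y ≤ T.depth x) (hx : x ∈ T.desc u) (hpx : T.parent x ∉ T.desc u) :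
    y ∉ T.desc u := by
  obtain rfl : x = u := (mem_desc_iff.1 hx).resolve_right hpx
  exact fun hy => (depth_lt_of_mem_desc hy hxy.symm).not_ge hd

lemma cut_parent_iff {u x : V} (hu : u ≠ T.root) :
    ¬(x ∈ T.desc u ↔ T.parent x ∈ T.desc u) ↔ x = u := by
  by_cases hx : x = u
  · subst hx
    simpa [mem_desc_self] using parent_not_mem_desc hu
  · simp [hx, mem_desc_iff (x := x)]

lemma edge_parent_iff {u x : V} (hu : u ≠ T.root) :
    (x = u ∧ T.parent x = T.parent u) ∨ (x = T.parent u ∧ T.parent x = u) ↔ x = u := by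
  refine ⟨?_, fun hx => Or.inl ⟨hx, hx ▸ rfl⟩⟩
  rintro (⟨hx, -⟩ | ⟨rfl, hpx⟩)
  · exact hx
  · exact absurd (eq_root_of_iterate_parent_eq_self (k := 2) two_pos hpx) hu

lemma depth_parent_lt {v : V} (hv : v ≠ T.root) : T.depth (T.parent v) < T.depth v := by
  have := depth_eq_zero_iff.not.2 hv
  rw [depth_parent]
  omega

lemma ne_root_of_depth_le {a b : V} (hab : a ≠ b) (hd : T.depth b ≤ T.depth a) : a ≠ T.root := by
  rintro rfl
  rw [depth_eq_zero_iff.2 rfl, Nat.le_zero, depth_eq_zero_iff] at hd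
  exact hab hd.symm

variable (T) in
noncomputable def path (a b : V) : List V :=
  if a = b then [a]
  else if T.depth b ≤ T.depth a then a :: path (T.parent a) b
  else path a (T.parent b) ++ [b]
termination_by T.depth a + T.depth b
decreasing_by
  all_goals rename_i hab hd
  · have := depth_parent_lt (ne_root_of_depth_le hab hd)
    omega
  · have := depth_parent_lt (ne_root_of_depth_le (T := T) (Ne.symm hab) (by omega))
    omega

lemma head?_path (a b : V) : (T.path a b).head? = some a := by
  fun_induction T.path a b <;> simp_all

lemma getLast?_path (a b : V) : (T.path a b).getLast? = some b := by
  fun_induction T.path a b <;> simp_all [List.getLast?_cons]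

lemma isChain_path (a b : V) : (T.path a b).IsChain (TreeAdj T) := by
  fun_induction T.path a b with
  | case1 => simp
  | case2 a b hab hd ih =>
    obtain ⟨r, hr⟩ := List.head?_eq_some_iff.1 (head?_path (T.parent a) b)
    rw [hr] at ih ⊢
    exact ih.cons_cons ⟨(parent_ne_self (ne_root_of_depth_le hab hd)).symm, Or.inl rfl⟩
  | case3 a b hab hd ih =>
    rw [← List.dropLast_append_getLast? _ (getLast?_path a (T.parent b))] at ih ⊢
    rw [List.append_assoc, List.singleton_append, List.isChain_split]
    refine ⟨ih, List.isChain_pair.2 ⟨parent_ne_self ?_, Or.inr rfl⟩⟩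
    exact ne_root_of_depth_le (Ne.symm hab) (by omega)

lemma crossings_path (u a b : V) :
    crossings (T.desc u) (T.path a b) = crossings (T.desc u) [a, b] := by
  fun_induction T.path a b with
  | case1 a => simp
  | case2 a b hab hd ih =>
    obtain ⟨r, hr⟩ := List.head?_eq_some_iff.1 (head?_path (T.parent a) b)
    rw [hr] at ih
    have h₁ : T.parent a ∈ T.desc u → a ∈ T.desc u := fun h => mem_desc_iff.2 (Or.inr h)
    have h₂ := not_mem_desc_of_parent_not_mem_desc (u := u) hab hd
    rw [hr, crossings_cons_cons, ih,
      ← crossings_pair_add_crossings_pair (a := a) (b := T.parent a) (c := b) (by tauto), add_comm]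
    simp
  | case3 a b hab hd ih =>
    rw [← List.dropLast_append_getLast? _ (getLast?_path a (T.parent b))] at ih ⊢
    have h₁ : T.parent b ∈ T.desc u → b ∈ T.desc u := fun h => mem_desc_iff.2 (Or.inr h)
    have h₂ := not_mem_desc_of_parent_not_mem_desc (T := T) (u := u) (Ne.symm hab) (by omega)
    rw [List.append_assoc, List.singleton_append, crossings_append_cons, ih,
      crossings_pair_add_crossings_pair (by tauto)]

variable (T) in
noncomputable def walkAlong (a : V) : List V → List V
  | [] => [a]
  | b :: l => (T.path a b).dropLast ++ walkAlong b l

lemma dropLast_path_append (a b : V) : (T.path a b).dropLast ++ [b] = T.path a b :=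
  List.dropLast_append_getLast? b (getLast?_path a b)

lemma head?_walkAlong (a : V) (l : List V) : (T.walkAlong a l).head? = some a := by
  induction l generalizing a with
  | nil => rfl
  | cons b l ih =>
    have h := head?_path (T := T) a b
    rw [← dropLast_path_append, List.head?_append] at h
    rwa [walkAlong, List.head?_append, ih]

lemma getLast?_walkAlong_concat (a : V) (l : List V) (b : V) :
    (T.walkAlong a (l ++ [b])).getLast? = some b := by
  induction l generalizing a with
  | nil => simp [walkAlong]
  | cons c l ih => simp [walkAlong, List.getLast?_append, ih]

lemma walkAlong_cons (a b : V) (l : List V) : ∃ w, T.walkAlong b l = b :: w ∧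
    T.walkAlong a (b :: l) = (T.path a b).dropLast ++ b :: w := by
  obtain ⟨w, hw⟩ := List.head?_eq_some_iff.1 (head?_walkAlong b l)
  exact ⟨w, hw, by rw [walkAlong, hw]⟩

lemma isChain_walkAlong (a : V) (l : List V) : (T.walkAlong a l).IsChain (TreeAdj T) := by
  induction l generalizing a with
  | nil => simp [walkAlong]
  | cons b l ih =>
    obtain ⟨w, hw, hcons⟩ := walkAlong_cons (T := T) a b l
    rw [hcons, List.isChain_split, dropLast_path_append, ← hw]
    exact ⟨isChain_path a b, ih b⟩

lemma crossings_walkAlong (u a : V) (l : List V) :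
    crossings (T.desc u) (T.walkAlong a l) = crossings (T.desc u) (a :: l) := by
  induction l generalizing a with
  | nil => rfl
  | cons b l ih =>
    obtain ⟨w, hw, hcons⟩ := walkAlong_cons (T := T) a b l
    rw [hcons, crossings_append_cons, dropLast_path_append, ← hw, crossings_path, ih,
      crossings_cons_cons, crossings_cons_cons, crossings_singleton, zero_add, add_comm]

lemma sublist_walkAlong {a : V} {l : List V} (hl : (a :: l).IsChain (· ≠ ·)) :
    (a :: l).Sublist (T.walkAlong a l) := by
  induction l generalizing a with
  | nil => simp [walkAlong]
  | cons b l ih =>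
    rw [List.isChain_cons_cons] at hl
    obtain ⟨r, hr⟩ := List.head?_eq_some_iff.1 (head?_path (T := T) a b)
    have hr' : r ≠ [] := by
      rintro rfl
      have h := getLast?_path (T := T) a b
      simp only [hr, List.getLast?_singleton, Option.some.injEq] at h
      exact hl.1 h
    rw [walkAlong, hr, List.dropLast_cons_of_ne_nil hr', List.cons_append]
    exact (ih hl.2).trans (List.sublist_append_right _ _) |>.cons_cons a

lemma isShortcutting_walkAlong {x₀ : V} {l : List V} (hl : (x₀ :: l).Nodup) (hne : l ≠ []) :
    IsShortcutting (x₀ :: l) (T.walkAlong x₀ (l ++ [x₀])) := by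
  have hchain : (x₀ :: l ++ [x₀]).IsChain (· ≠ ·) := by
    refine hl.isChain.append (List.isChain_singleton _) ?_
    obtain _ | ⟨b, l⟩ := l
    · exact absurd rfl hne
    intro x hx y hy
    rw [List.head?_singleton, Option.mem_some_iff] at hy
    subst hy
    rw [List.getLast?_cons_cons] at hx
    exact fun h => (List.nodup_cons.1 hl).1 (h ▸ List.mem_of_getLast? hx)
  refine ⟨0, 0, ?_⟩
  simpa using List.sublist_dropLast_of_append_singleton_sublist (sublist_walkAlong hchain)

variable (T) in
noncomputable def childOf (q : V × V) : V := if T.parent q.1 = q.2 then q.1 else q.2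

lemma childOf_ne_root {x y : V} (hxy : TreeAdj T x y) : T.childOf (x, y) ≠ T.root := by
  have := T.parent_root
  obtain ⟨hne, hp | hp⟩ := hxy <;> dsimp only [childOf] <;> split_ifs <;> rintro rfl <;> simp_all

lemma edge_iff_childOf_eq {u x y : V} (hu : u ≠ T.root) (hxy : TreeAdj T x y) :
    (x = u ∧ y = T.parent u) ∨ (x = T.parent u ∧ y = u) ↔ T.childOf (x, y) = u := by
  dsimp only [childOf]
  split_ifs with h
  · subst h
    simpa only [eq_comm (b := T.parent x)] using edge_parent_iff hu
  · obtain rfl : T.parent y = x := hxy.2.resolve_left h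
    refine Iff.trans ?_ (edge_parent_iff hu)
    tauto

lemma cut_iff_childOf_eq {u x y : V} (hu : u ≠ T.root) (hxy : TreeAdj T x y) :
    ¬(x ∈ T.desc u ↔ y ∈ T.desc u) ↔ T.childOf (x, y) = u := by
  dsimp only [childOf]
  split_ifs with h
  · subst h
    exact cut_parent_iff hu
  · obtain rfl : T.parent y = x := hxy.2.resolve_left h
    rw [iff_comm (a := T.parent y ∈ T.desc u)]
    exact cut_parent_iff hu

section EdgeTraversals

variable [DecidableEq V]

variable (T) in
def edgeTraversals (t : List V) (v : V) : ℕ :=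
  (t.zip t.tail).countP fun p =>
    decide ((p.1 = v ∧ p.2 = T.parent v) ∨ (p.1 = T.parent v ∧ p.2 = v))

lemma edgeTraversals_eq_crossings {t : List V} (ht : t.IsChain (TreeAdj T)) {u : V}
    (hu : u ≠ T.root) : T.edgeTraversals t u = crossings (T.desc u) t := by
  refine List.countP_congr fun q hq => ?_
  have hadj := ht.rel_of_mem_zip_tail q hq
  simp only [decide_eq_true_eq]
  rw [edge_iff_childOf_eq hu hadj, ← cut_iff_childOf_eq hu hadj]

lemma sum_edgeTraversals [Fintype V] {t : List V} (ht : t.IsChain (TreeAdj T)) :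
    ∑ v ∈ Finset.univ.erase T.root, T.edgeTraversals t v = (t.zip t.tail).length := by
  have hcount (v) (hv : v ∈ Finset.univ.erase T.root) :
      T.edgeTraversals t v = Multiset.count v ((t.zip t.tail).map T.childOf : List V) := by
    rw [Multiset.coe_count, List.count, List.countP_map]
    refine List.countP_congr fun q hq => ?_
    simp only [decide_eq_true_eq, Function.comp_apply, beq_iff_eq]
    exact edge_iff_childOf_eq (Finset.ne_of_mem_erase hv) (ht.rel_of_mem_zip_tail q hq)
  rw [Finset.sum_congr rfl hcount, Multiset.sum_count_eq_card, Multiset.coe_card, List.length_map]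
  simp only [Multiset.mem_coe, List.mem_map, Finset.mem_erase, Finset.mem_univ, and_true]
  rintro _ ⟨q, hq, rfl⟩
  exact childOf_ne_root (ht.rel_of_mem_zip_tail q hq)

end EdgeTraversals

end ParentTree

lemma CycleConforms.cyclicCrossings_desc_eq_two {V : Type} {T : ParentTree V} {h : List V}
    (hh : IsHamCycle h) (hc : CycleConforms T h) {v : V} (hv : v ≠ T.root) :
    cyclicCrossings (T.desc v) h = 2 :=
  cyclicCrossings_eq_two ((isCyclicArc_iff_isCyclicSplit hh).1 (hc v)).cyclicCrossings_le_two
    (hh.2 v) (hh.2 T.root) (T.mem_desc_self v) (T.root_not_mem_desc hv)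

section EulerTour

open ParentTree

variable {V : Type} [Fintype V] [DecidableEq V] {T : ParentTree V}

lemma IsEulerTour.crossings_desc_le_two {t : List V} (ht : IsEulerTour T t) (u : V) :
    crossings (T.desc u) t ≤ 2 := by
  by_cases hu : u = T.root
  · subst hu
    rw [desc_root, crossings_eq_zero_of_forall_mem_iff True (by simp)]
    omega
  · rw [← edgeTraversals_eq_crossings ht.2.2.1 hu]
    exact (ht.2.2.2 u hu).le

lemma cycleConforms_of_isShortcutting {h t : List V} (hh : IsHamCycle h)
    (ht : IsEulerTour T t) (hs : IsShortcutting h t) : CycleConforms T h := by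
  obtain ⟨i, j, hsub⟩ := hs
  intro u
  rw [isCyclicArc_iff_isCyclicSplit hh]
  refine IsCyclicSplit.of_rotate (n := i) (isCyclicSplit_of_crossings_le_two ?_)
  calc crossings (T.desc u) (h.rotate i)
      ≤ crossings (T.desc u) (t.dropLast.rotate j) := crossings_mono hsub
    _ ≤ cyclicCrossings (T.desc u) (t.dropLast.rotate j) := crossings_le_cyclicCrossings _
    _ = crossings (T.desc u) t := by
      rw [cyclicCrossings_rotate, crossings_eq_cyclicCrossings_dropLast ht.2.1]
    _ ≤ 2 := ht.crossings_desc_le_two u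

lemma isEulerTour_walkAlong {x₀ : V} {l : List V}
    (hcc : ∀ v ≠ T.root, cyclicCrossings (T.desc v) (x₀ :: l) = 2) :
    IsEulerTour T (T.walkAlong x₀ (l ++ [x₀])) := by
  set t := T.walkAlong x₀ (l ++ [x₀])
  have hchain : t.IsChain (TreeAdj T) := isChain_walkAlong _ _
  have htrav : ∀ v ≠ T.root, T.edgeTraversals t v = 2 := fun v hv => by
    rw [edgeTraversals_eq_crossings hchain hv, crossings_walkAlong, ← hcc v hv]
    rfl
  refine ⟨?_, by rw [head?_walkAlong, getLast?_walkAlong_concat], hchain, htrav⟩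
  have hne : t ≠ [] :=
    List.ne_nil_of_mem (List.mem_of_mem_head? (head?_walkAlong (T := T) x₀ (l ++ [x₀])))
  have hlen : t.length = (t.zip t.tail).length + 1 := by
    have := List.length_pos_iff.2 hne
    simp only [List.length_zip, List.length_tail]
    omega
  rw [hlen, ← sum_edgeTraversals hchain,
    Finset.sum_congr rfl fun v hv => htrav v (Finset.ne_of_mem_erase hv), Finset.sum_const,
    Finset.card_erase_of_mem (Finset.mem_univ _), Finset.card_univ, smul_eq_mul, mul_comm]

lemma exists_isEulerTour_of_cycleConforms (hV : 1 < Fintype.card V) {h : List V}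
    (hh : IsHamCycle h) (hc : CycleConforms T h) : ∃ t, IsEulerTour T t ∧ IsShortcutting h t := by
  obtain ⟨a, b, hab⟩ := Fintype.exists_pair_of_one_lt_card hV
  obtain _ | ⟨x₀, l⟩ := h
  · exact absurd (hh.2 a) List.not_mem_nil
  have hl : l ≠ [] := by
    rintro rfl
    exact hab ((List.mem_singleton.1 (hh.2 a)).trans (List.mem_singleton.1 (hh.2 b)).symm)
  exact ⟨_, isEulerTour_walkAlong fun v hv => hc.cyclicCrossings_desc_eq_two hh hv,
    isShortcutting_walkAlong hh.1 hl⟩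

end EulerTour

theorem stmt3_general {V : Type} [Fintype V] [DecidableEq V]
    (hn : 3 ≤ Fintype.card V) (T : ParentTree V) (h : List V) (hh : IsHamCycle h) :
    (∃ t : List V, IsEulerTour T t ∧ IsShortcutting h t) ↔ CycleConforms T h :=
  ⟨fun ⟨_, ht, hs⟩ => cycleConforms_of_isShortcutting hh ht hs,
    exists_isEulerTour_of_cycleConforms (by omega) hh⟩

/-- A Hamiltonian cycle can be obtained by shortcutting some Euler tour of the
doubled tree of `T` if and only if it conforms to `T`. -/
theorem stmt3 {V X : Type} [Fintype V] [DecidableEq V] [MetricSpace X]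
    (hn : 3 ≤ Fintype.card V) (f : V → X) (hf : Function.Injective f)
    (T : ParentTree V) (h : List V) (hh : IsHamCycle h) :
    (∃ t : List V, IsEulerTour T t ∧ IsShortcutting h t) ↔ CycleConforms T h :=
  stmt3_general hn T h hh
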